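/- Let u be upper semicontinuous on open Ω ⊆ ℝⁿ enjoying comparison with cones from above, and define S⁺u(x) = lim_{r→0⁺}(max_{∂B_r(x)} u - u(x))/r. Then S⁺u is upper semicontinuous on Ω, and if u is differentiable at x then S⁺u(x) = |Du(x)|. -/

import Mathlib

open Metric

/-- Comparison with cones from above in `Ω`. -/
def CompConesAbove {n : ℕ} (Ω : Set (EuclideanSpace ℝ (Fin n)))
    (u : EuclideanSpace ℝ (Fin n) → ℝ) : Prop :=
  ∀ V : Set (EuclideanSpace ℝ (Fin n)), IsOpen V → Bornology.IsBounded V → closure V ⊆ Ω →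
    ∀ z : EuclideanSpace ℝ (Fin n), ∀ a b : ℝ,
      (∀ y ∈ frontier (V \ {z}), u y ≤ a + b * ‖y - z‖) →
      ∀ y ∈ V, u y ≤ a + b * ‖y - z‖

/-- `S⁺u(z) = lim_{r→0⁺} (max_{∂B_r(z)} u - u(z))/r`, realized (by monotonicity of the
difference quotients) as the infimum over admissible radii. -/
noncomputable def Splus {n : ℕ} (Ω : Set (EuclideanSpace ℝ (Fin n)))
    (u : EuclideanSpace ℝ (Fin n) → ℝ) (z : EuclideanSpace ℝ (Fin n)) : ℝ :=
  sInf {q : ℝ | ∃ s : ℝ, 0 < s ∧ closedBall z s ⊆ Ω ∧ q = (sSup (u '' sphere z s) - u z) / s}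

/-!
Comparing `u` on `B_r(z)` with the cone `u(z) + q_r(z) |w - z|`, where
`q_r(z) = (max_{∂B_r(z)} u - u(z)) / r`, gives `u(w) ≤ u(z) + q_r(z) |w - z|` on `B_r(z)`.
Hence `q_r(z)` is nondecreasing in `r`, so `S⁺u(z)` is the limit of `q_r(z)` as `r → 0⁺`,
which is `|Du(z)|` wherever `u` is differentiable. Cones centred at points near `z` bound `u`
from below by `u(z) - C |y - z|`; together with the cone bound on a fixed ball `B_s(x)` this gives
`q_{s-ρ}(y) ≤ (s q_s(x) + O(ρ)) / (s - ρ)` for `y ∈ B_ρ(x)`, whence upper semicontinuity.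
-/

open Filter Topology Set
open scoped RealInnerProductSpace

section SphereSlope

variable {E : Type*} [PseudoMetricSpace E]

noncomputable def sphereSlope (u : E → ℝ) (z : E) (s : ℝ) : ℝ :=
  (sSup (u '' sphere z s) - u z) / s

variable {u : E → ℝ} {z w : E} {s a : ℝ}

lemma sphereSlope_le (hs : 0 < s) (hne : (sphere z s).Nonempty)
    (h : ∀ w ∈ sphere z s, u w ≤ u z + s * a) : sphereSlope u z s ≤ a := by
  have hsup : sSup (u '' sphere z s) ≤ u z + s * a :=
    csSup_le (hne.image u) (forall_mem_image.mpr h)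
  rw [sphereSlope, div_le_iff₀ hs]
  linarith

lemma le_sphereSlope (hs : 0 < s) (hbdd : BddAbove (u '' sphere z s)) (hw : w ∈ sphere z s)
    (h : u z + s * a ≤ u w) : a ≤ sphereSlope u z s := by
  have hsup : u w ≤ sSup (u '' sphere z s) := le_csSup hbdd (mem_image_of_mem u hw)
  rw [sphereSlope, le_div_iff₀ hs]
  linarith

lemma UpperSemicontinuousOn.bddAbove_image_sphere [ProperSpace E] {Ω : Set E}
    (hu : UpperSemicontinuousOn u Ω) (h : closedBall z s ⊆ Ω) : BddAbove (u '' sphere z s) :=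
  (hu.mono (sphere_subset_closedBall.trans h)).bddAbove_of_isCompact (isCompact_sphere z s)

lemma setOf_closedBall_subset_mem_nhdsGT {Ω : Set E} (hΩ : IsOpen Ω) (hz : z ∈ Ω) :
    {s : ℝ | 0 < s ∧ closedBall z s ⊆ Ω} ∈ 𝓝[>] 0 := by
  obtain ⟨ε, hε, hball⟩ := Metric.isOpen_iff.mp hΩ z hz
  exact mem_of_superset (Ioo_mem_nhdsGT hε) fun s hs =>
    ⟨hs.1, (closedBall_subset_ball hs.2).trans hball⟩

end SphereSlope

lemma isGLB_image_of_monotoneOn_of_tendsto_nhdsGT {f : ℝ → ℝ} {S : Set ℝ} {a L : ℝ}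
    (hSa : S ⊆ Ioi a) (hS : S ∈ 𝓝[>] a) (hf : MonotoneOn f S)
    (hL : Tendsto f (𝓝[>] a) (𝓝 L)) : IsGLB (f '' S) L := by
  refine ⟨forall_mem_image.mpr fun s hs => ?_, fun b hb => ?_⟩
  · apply le_of_tendsto hL
    filter_upwards [hS, Ioo_mem_nhdsGT (hSa hs)] with t ht hts
    exact hf ht hs hts.2.le
  · apply ge_of_tendsto hL
    filter_upwards [hS] with t ht
    exact hb (mem_image_of_mem f ht)

section Gradient

variable {E : Type*} [NormedAddCommGroup E] [InnerProductSpace ℝ E] [Nontrivial E]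

lemma exists_norm_eq_one_inner_eq_norm (g : E) : ∃ v : E, ‖v‖ = 1 ∧ ⟪g, v⟫ = ‖g‖ := by
  rcases eq_or_ne g 0 with rfl | hg
  · obtain ⟨v, hv⟩ := exists_norm_eq E zero_le_one
    exact ⟨v, hv, by simp⟩
  · refine ⟨‖g‖⁻¹ • g, ?_, ?_⟩
    · rw [norm_smul, norm_inv, norm_norm, inv_mul_cancel₀ (norm_ne_zero_iff.mpr hg)]
    · rw [real_inner_smul_right, real_inner_self_eq_norm_sq]
      field_simp

lemma HasGradientAt.tendsto_sphereSlope [CompleteSpace E] {u : E → ℝ} {g x : E}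
    (hu : HasGradientAt u g x) :
    Tendsto (sphereSlope u x) (𝓝[>] 0) (𝓝 ‖g‖) := by
  obtain ⟨v, hv, hgv⟩ := exists_norm_eq_one_inner_eq_norm g
  rw [Metric.tendsto_nhdsWithin_nhds]
  intro ε hε
  obtain ⟨δ, hδ, hsmall⟩ := Metric.eventually_nhds_iff.mp
    ((hasGradientAt_iff_isLittleO.mp hu).def (half_pos hε))
  refine ⟨δ, hδ, fun s hs hsδ => ?_⟩
  have hs : 0 < s := hs
  replace hsδ : s < δ := by simpa [abs_of_pos hs] using hsδ
  have hlin : ∀ w ∈ sphere x s, |u w - u x - ⟪g, w - x⟫| ≤ ε / 2 * s := fun w hw => by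
    have hws : dist w x = s := hw
    have := hsmall (hws.trans_lt hsδ)
    rwa [Real.norm_eq_abs, ← dist_eq_norm w x, hws] at this
  have hxv : x + s • v ∈ sphere x s := by
    simp [norm_smul, abs_of_pos hs, hv]
  have hupper : ∀ w ∈ sphere x s, u w ≤ u x + s * (‖g‖ + ε / 2) := fun w hw => by
    have hinner : ⟪g, w - x⟫ ≤ ‖g‖ * s := by
      simpa [← dist_eq_norm, (mem_sphere.mp hw)] using real_inner_le_norm g (w - x)
    linarith [(abs_le.mp (hlin w hw)).2]
  have hbdd : BddAbove (u '' sphere x s) :=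
    ⟨_, forall_mem_image.mpr hupper⟩
  have hlower : u x + s * (‖g‖ - ε / 2) ≤ u (x + s • v) := by
    have hinner : ⟪g, x + s • v - x⟫ = s * ‖g‖ := by
      rw [add_sub_cancel_left, real_inner_smul_right, hgv]
    linarith [(abs_le.mp (hlin _ hxv)).1]
  rw [Real.dist_eq, abs_lt]
  constructor
  · linarith [le_sphereSlope hs hbdd hxv hlower]
  · linarith [sphereSlope_le hs ⟨_, hxv⟩ hupper]

end Gradient

lemma frontier_ball_diff_singleton_subset {X : Type*} [MetricSpace X] {z : X} {r : ℝ} :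
    frontier (ball z r \ {z}) ⊆ insert z (sphere z r) := by
  intro y hy
  rw [(isOpen_ball.sdiff isClosed_singleton).frontier_eq] at hy
  obtain ⟨hcl, hnot⟩ := hy
  have hyr : dist y z ≤ r :=
    (closure_mono sdiff_subset |>.trans closure_ball_subset_closedBall) hcl
  by_cases hyz : y = z
  · exact .inl hyz
  · exact .inr (hyr.antisymm (not_lt.mp fun h => hnot ⟨h, hyz⟩))

section Cones

variable {n : ℕ} {Ω : Set (EuclideanSpace ℝ (Fin n))} {u : EuclideanSpace ℝ (Fin n) → ℝ}
  {x y z : EuclideanSpace ℝ (Fin n)} {r s ρ : ℝ}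

lemma Splus_eq_sInf_image :
    Splus Ω u z = sInf (sphereSlope u z '' {s | 0 < s ∧ closedBall z s ⊆ Ω}) := by
  rw [Splus]
  congr 1
  ext q
  constructor
  · rintro ⟨s, hs, hzs, rfl⟩
    exact ⟨s, ⟨hs, hzs⟩, rfl⟩
  · rintro ⟨s, ⟨hs, hzs⟩, rfl⟩
    exact ⟨s, hs, hzs, rfl⟩

lemma CompConesAbove.le_add_sphereSlope_mul (hcca : CompConesAbove Ω u) (hr : 0 < r)
    (hzr : closedBall z r ⊆ Ω) (hbdd : BddAbove (u '' sphere z r)) (hw : y ∈ ball z r) :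
    u y ≤ u z + sphereSlope u z r * ‖y - z‖ := by
  refine hcca (ball z r) isOpen_ball isBounded_ball (closure_ball_subset_closedBall.trans hzr)
    z _ _ (fun w hw => ?_) y hw
  rcases frontier_ball_diff_singleton_subset hw with rfl | hw
  · simp
  · rw [← dist_eq_norm, mem_sphere.mp hw, sphereSlope, div_mul_cancel₀ _ hr.ne']
    linarith [le_csSup hbdd (mem_image_of_mem u hw)]

lemma CompConesAbove.sphereSlope_mono [NeZero n] (hcca : CompConesAbove Ω u)
    (husc : UpperSemicontinuousOn u Ω) (hs : 0 < s) (hsr : s ≤ r) (hzr : closedBall z r ⊆ Ω) :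
    sphereSlope u z s ≤ sphereSlope u z r := by
  rcases hsr.eq_or_lt with rfl | hsr
  · rfl
  refine sphereSlope_le hs (NormedSpace.sphere_nonempty.mpr hs.le) fun w hw => ?_
  have hws : dist w z = s := hw
  have := hcca.le_add_sphereSlope_mul (hs.trans hsr) hzr (husc.bddAbove_image_sphere hzr)
    (mem_ball.mpr (hws.trans_lt hsr))
  rwa [← dist_eq_norm, hws, mul_comm] at this

lemma CompConesAbove.exists_lower_cone_bound [NeZero n] (hcca : CompConesAbove Ω u)
    (hΩ : IsOpen Ω) (husc : UpperSemicontinuousOn u Ω) (hz : z ∈ Ω) :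
    ∃ r C : ℝ, 0 < r ∧ 0 ≤ C ∧ ∀ y ∈ closedBall z r, u z - C * ‖y - z‖ ≤ u y := by
  obtain ⟨R, hR, hball⟩ := Metric.isOpen_iff.mp hΩ z hz
  set r := R / 4 with hr_def
  have hr : 0 < r := by positivity
  have h3r : closedBall z (3 * r) ⊆ Ω :=
    (closedBall_subset_ball (by linarith [hr_def])).trans hball
  obtain ⟨K, hK⟩ := (husc.mono h3r).bddAbove_of_isCompact (isCompact_closedBall z (3 * r))
  have hKz : u z ≤ K := hK (mem_image_of_mem u (mem_closedBall_self (by positivity)))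
  refine ⟨r, (K - u z) / r, hr, div_nonneg (by linarith) hr.le, fun y hy => ?_⟩
  have hyz : ‖y - z‖ ≤ r := by rw [← dist_eq_norm]; exact hy
  have hy2r : closedBall y (2 * r) ⊆ closedBall z (3 * r) :=
    closedBall_subset_closedBall' (by linarith [mem_closedBall.mp hy])
  -- Cone comparison on `B_{2r}(y)`, which contains `z`, with `max u ≤ K` on its boundary.
  have hslope : sphereSlope u y (2 * r) ≤ (K - u y) / (2 * r) :=
    sphereSlope_le (by positivity) (NormedSpace.sphere_nonempty.mpr (by positivity))
      fun w hw => by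
        rw [mul_div_cancel₀ _ (by positivity)]
        linarith [hK (mem_image_of_mem u (hy2r (sphere_subset_closedBall hw)))]
  have hcone := hcca.le_add_sphereSlope_mul (by positivity) (hy2r.trans h3r)
    (husc.bddAbove_image_sphere (hy2r.trans h3r))
    (show z ∈ ball y (2 * r) by rw [mem_ball, dist_comm]; linarith [mem_closedBall.mp hy])
  rw [norm_sub_rev] at hcone
  have hmul : (u z - u y) * (2 * r) ≤ (K - u y) * ‖y - z‖ := by
    have := mul_le_mul_of_nonneg_right hslope (norm_nonneg (y - z))
    rw [div_mul_eq_mul_div, le_div_iff₀ (by positivity)] at this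
    nlinarith
  rw [div_mul_eq_mul_div, sub_le_comm, le_div_iff₀ hr]
  rcases le_total (u z - u y) 0 with hneg | hpos
  · nlinarith [norm_nonneg (y - z)]
  · nlinarith

lemma CompConesAbove.bddBelow_image_sphereSlope [NeZero n] (hcca : CompConesAbove Ω u)
    (hΩ : IsOpen Ω) (husc : UpperSemicontinuousOn u Ω) (hz : z ∈ Ω) :
    BddBelow (sphereSlope u z '' {s | 0 < s ∧ closedBall z s ⊆ Ω}) := by
  obtain ⟨r, C, hr, -, hlow⟩ := hcca.exists_lower_cone_bound hΩ husc hz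
  refine ⟨-C, forall_mem_image.mpr fun s ⟨hs, hzs⟩ => ?_⟩
  have ht : 0 < min s r := lt_min hs hr
  have hzt : closedBall z (min s r) ⊆ Ω :=
    (closedBall_subset_closedBall (min_le_left _ _)).trans hzs
  obtain ⟨w, hw⟩ := (NormedSpace.sphere_nonempty (x := z)).mpr ht.le
  have hwz : ‖w - z‖ = min s r := by rw [← dist_eq_norm]; exact hw
  have hlow_w := hlow w (mem_closedBall.mpr (hw.trans_le (min_le_right _ _)))
  rw [hwz] at hlow_w
  calc -C ≤ sphereSlope u z (min s r) :=
        le_sphereSlope ht (husc.bddAbove_image_sphere hzt) hw (by linarith)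
    _ ≤ sphereSlope u z s := hcca.sphereSlope_mono husc ht (min_le_left _ _) hzs

lemma CompConesAbove.splus_le_sphereSlope [NeZero n] (hcca : CompConesAbove Ω u)
    (hΩ : IsOpen Ω) (husc : UpperSemicontinuousOn u Ω) (hz : z ∈ Ω) (hs : 0 < s)
    (hzs : closedBall z s ⊆ Ω) : Splus Ω u z ≤ sphereSlope u z s := by
  rw [Splus_eq_sInf_image]
  exact csInf_le (hcca.bddBelow_image_sphereSlope hΩ husc hz) ⟨s, ⟨hs, hzs⟩, rfl⟩

lemma CompConesAbove.sphereSlope_le_of_dist_lt [NeZero n] (hcca : CompConesAbove Ω u)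
    (husc : UpperSemicontinuousOn u Ω) (hxs : closedBall x s ⊆ Ω) (hρs : ρ < s)
    (hyx : dist y x < ρ) :
    sphereSlope u y (s - ρ) ≤
      (sphereSlope u x s * s + 2 * |sphereSlope u x s| * ρ + (u x - u y)) / (s - ρ) := by
  have hsρ : 0 < s - ρ := sub_pos.mpr hρs
  have hs : 0 < s := by linarith [dist_nonneg (x := y) (y := x)]
  set b := sphereSlope u x s
  refine sphereSlope_le hsρ (NormedSpace.sphere_nonempty.mpr hsρ.le) fun w hw => ?_
  rw [mul_div_cancel₀ _ hsρ.ne']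
  have hwy : dist w y = s - ρ := hw
  have hwx : dist w x < s := by linarith [dist_triangle w y x]
  have hwx' : s - 2 * ρ ≤ dist w x := by linarith [dist_triangle w x y, dist_comm x y]
  have hcone := hcca.le_add_sphereSlope_mul hs hxs (husc.bddAbove_image_sphere hxs)
    (mem_ball.mpr hwx)
  rw [← dist_eq_norm] at hcone
  have hdev : b * (dist w x - s) ≤ |b| * (2 * ρ) := (le_abs_self _).trans <| by
    rw [abs_mul]
    exact mul_le_mul_of_nonneg_left (abs_le.mpr ⟨by linarith, by linarith⟩) (abs_nonneg b)
  linarith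

theorem CompConesAbove.upperSemicontinuousOn_splus [NeZero n] (hcca : CompConesAbove Ω u)
    (hΩ : IsOpen Ω) (husc : UpperSemicontinuousOn u Ω) :
    UpperSemicontinuousOn (Splus Ω u) Ω := by
  intro x hx t ht
  rw [Splus_eq_sInf_image] at ht
  obtain ⟨_, ⟨s, ⟨hs, hxs⟩, rfl⟩, hst⟩ := exists_lt_of_csInf_lt
    ((Filter.nonempty_of_mem (setOf_closedBall_subset_mem_nhdsGT hΩ hx)).image _) ht
  obtain ⟨r, C, hr, hC, hlow⟩ := hcca.exists_lower_cone_bound hΩ husc hx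
  set b := sphereSlope u x s
  set A := 2 * |b| + C
  have hlim : Tendsto (fun ρ => (b * s + A * ρ) / (s - ρ)) (𝓝 0) (𝓝 b) := by
    have hcont : ContinuousAt (fun ρ => (b * s + A * ρ) / (s - ρ)) 0 :=
      ContinuousAt.div (by fun_prop) (by fun_prop) (by simpa using hs.ne')
    simpa [hs.ne'] using hcont.tendsto
  have hsmall : ∀ᶠ ρ in 𝓝[>] 0, ((b * s + A * ρ) / (s - ρ) < t ∧ ρ < s ∧ ρ < r) ∧ 0 < ρ :=
    (eventually_nhdsWithin_of_eventually_nhds ((hlim.eventually (gt_mem_nhds hst)).and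
      ((gt_mem_nhds hs).and (gt_mem_nhds hr)))).and self_mem_nhdsWithin
  obtain ⟨ρ, ⟨hρt, hρs, hρr⟩, hρ⟩ := hsmall.exists
  filter_upwards [nhdsWithin_le_nhds (ball_mem_nhds x hρ), self_mem_nhdsWithin] with y hyx hy
  have hyx : dist y x < ρ := hyx
  have hxy : u x - u y ≤ C * ρ := by
    have := hlow y (mem_closedBall.mpr (by linarith))
    rw [← dist_eq_norm] at this
    nlinarith [mul_le_mul_of_nonneg_left hyx.le hC]
  calc Splus Ω u y ≤ sphereSlope u y (s - ρ) :=
        hcca.splus_le_sphereSlope hΩ husc hy (by linarith)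
          ((closedBall_subset_closedBall' (by linarith)).trans hxs)
    _ ≤ (b * s + 2 * |b| * ρ + (u x - u y)) / (s - ρ) :=
        hcca.sphereSlope_le_of_dist_lt husc hxs hρs hyx
    _ ≤ (b * s + A * ρ) / (s - ρ) := div_le_div_of_nonneg_right (by linarith) (by linarith)
    _ < t := hρt

theorem CompConesAbove.splus_eq_norm_gradient [NeZero n] (hcca : CompConesAbove Ω u)
    (hΩ : IsOpen Ω) (husc : UpperSemicontinuousOn u Ω) (hx : x ∈ Ω)
    (hu : DifferentiableAt ℝ u x) : Splus Ω u x = ‖gradient u x‖ := by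
  have hS := setOf_closedBall_subset_mem_nhdsGT hΩ hx
  have hmono : MonotoneOn (sphereSlope u x) {s | 0 < s ∧ closedBall x s ⊆ Ω} :=
    fun s ⟨hs, _⟩ r ⟨_, hxr⟩ hsr => hcca.sphereSlope_mono husc hs hsr hxr
  rw [Splus_eq_sInf_image]
  exact (isGLB_image_of_monotoneOn_of_tendsto_nhdsGT (fun s hs => hs.1) hS hmono
    hu.hasGradientAt.tendsto_sphereSlope).csInf_eq ((Filter.nonempty_of_mem hS).image _)

end Cones

/-- `S⁺u` is upper semicontinuous on `Ω`, and equals `|Du(x)|` at points of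
differentiability. -/
theorem stmt6 {n : ℕ} (hn : 0 < n) (Ω : Set (EuclideanSpace ℝ (Fin n))) (hΩ : IsOpen Ω)
    (u : EuclideanSpace ℝ (Fin n) → ℝ) (husc : UpperSemicontinuousOn u Ω)
    (hcca : CompConesAbove Ω u) :
    UpperSemicontinuousOn (Splus Ω u) Ω ∧
      ∀ x ∈ Ω, DifferentiableAt ℝ u x → Splus Ω u x = ‖gradient u x‖ :=
  have : NeZero n := ⟨hn.ne'⟩
  ⟨hcca.upperSemicontinuousOn_splus hΩ husc,
    fun _ hx hu => hcca.splus_eq_norm_gradient hΩ husc hx hu⟩
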